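/- Let u, d : ℤ → ℕ with u antitone, d monotone, and suppose for every s, (u s : ℤ) - u (s+1) + (d (s+1) : ℤ) - d s ≤ 1. Define s to be balanced if (u s = 0 ∧ d s = 0) ∨ (u s ≥ 1 ∧ d s ≥ 1). Then the set of balanced integers is an interval: if s₁ ≤ s₂ ≤ s₃ and s₁, s₃ are balanced, then s₂ is balanced. -/
import Mathlib


/-- `s` is balanced if both genera (above and below the level-`s` sphere) vanish,
or both are positive. -/
def BalancedLevel (u d : ℤ → ℕ) (s : ℤ) : Prop :=
  (u s = 0 ∧ d s = 0) ∨ (1 ≤ u s ∧ 1 ≤ d s)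

/-- The set of balanced levels is an interval: with `u` antitone, `d` monotone and
the one-saddle condition, if `s₁ ≤ s₂ ≤ s₃` and `s₁, s₃` are balanced then so is `s₂`. -/
theorem balanced_levels_interval (u d : ℤ → ℕ)
    (hu : Antitone u) (hd : Monotone d)
    (hsaddle : ∀ s : ℤ, ((u s : ℤ) - (u (s + 1) : ℤ)) + ((d (s + 1) : ℤ) - (d s : ℤ)) ≤ 1)
    (s₁ s₂ s₃ : ℤ) (h12 : s₁ ≤ s₂) (h23 : s₂ ≤ s₃)
    (hb1 : BalancedLevel u d s₁) (hb3 : BalancedLevel u d s₃) :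
    BalancedLevel u d s₂ := by
  have h1 := hu h12
  have h2 := hu h23
  have h3 := hd h12
  have h4 := hd h23
  unfold BalancedLevel at *
  omega
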